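/- Consider the nine curves Z(Q), Z(x+2y−4z), Z(x), Z(y), Z(x−y+2z), Z(2x+2y−5z), Z(x+7y−4z), Z(2x−2y+z) in ℙ²(ℂ). The intersection Z(x+2y−4z) ∩ Z(Q) consists of exactly two points, and each of these points lies on exactly two of the nine curves; while for each of the linear forms x−y+2z, 2x+2y−5z, x+7y−4z, 2x−2y+z, every point of its zero locus intersected with Z(Q) lies on at least three of the nine curves. In particular, Z(x+2y−4z) is the unique line of the arrangement meeting the conic Z(Q) only in ordinary double points of the arrangement. -/
import Mathlib


open MvPolynomial

noncomputable section

/-- The complex projective plane `ℙ²(ℂ)`: the projectivization of `ℂ³`. -/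
abbrev P2 : Type := Projectivization ℂ (Fin 3 → ℂ)

/-- The quotient topology on `ℙ²(ℂ)`. -/
instance : TopologicalSpace P2 :=
  inferInstanceAs (TopologicalSpace (Quotient _))

theorem vne {a b c : ℂ} (h : a ≠ 0 ∨ b ≠ 0 ∨ c ≠ 0) : ![a, b, c] ≠ 0 := by
  intro hv
  rcases h with h | h | h
  · exact h (by simpa using congrFun hv 0)
  · exact h (by simpa using congrFun hv 1)
  · exact h (by simpa using congrFun hv 2)

/-- The projective point `[a : b : c]` of `ℙ²(ℂ)`. -/
def pt (a b c : ℂ) (h : a ≠ 0 ∨ b ≠ 0 ∨ c ≠ 0) : P2 :=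
  Projectivization.mk ℂ ![a, b, c] (vne h)

/-- The zero locus in `ℙ²(ℂ)` of a (homogeneous) polynomial `F ∈ ℂ[x,y,z]`. -/
def Zloc (F : MvPolynomial (Fin 3) ℂ) : Set P2 :=
  {P | MvPolynomial.eval P.rep F = 0}

/-- The conic `Q = x² + y² + z² − 2xy − 2xz − 2yz`. -/
def Q : MvPolynomial (Fin 3) ℂ :=
  X 0 ^ 2 + X 1 ^ 2 + X 2 ^ 2 - 2 * X 0 * X 1 - 2 * X 0 * X 2 - 2 * X 1 * X 2

/-- The number of curves among `F 0, …, F 7` passing through `P`. -/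
def count (F : Fin 8 → MvPolynomial (Fin 3) ℂ) (P : P2) : ℕ :=
  {i : Fin 8 | P ∈ Zloc (F i)}.ncard

def Fs : Fin 8 → MvPolynomial (Fin 3) ℂ :=
  ![Q, (X 0 + 2 * X 1 - 4 * X 2), X 0, X 1, (X 0 - X 1 + 2 * X 2), (2 * X 0 + 2 * X 1 - 5 * X 2), (X 0 + 7 * X 1 - 4 * X 2), (2 * X 0 - 2 * X 1 + X 2)]

/-! ### Auxiliary machinery -/

def s : ℂ := (Real.sqrt 10 : ℝ)

lemma hs : s ^ 2 = 10 := by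
  rw [s]; norm_cast; rw [Real.sq_sqrt]; norm_num

lemma sne {a b : ℂ} (h : a ^ 2 ≠ 10 * b ^ 2) : a - b * s ≠ 0 := by
  intro h0
  apply h
  have hab : a = b * s := by linear_combination h0
  rw [hab, mul_pow, hs]; ring

lemma memZ {F : MvPolynomial (Fin 3) ℂ}
    (hF : ∃ n : ℕ, ∀ (c : ℂ) (w : Fin 3 → ℂ), eval (c • w) F = c ^ n * eval w F)
    (v : Fin 3 → ℂ) (hv : v ≠ 0) :
    Projectivization.mk ℂ v hv ∈ Zloc F ↔ eval v F = 0 := by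
  obtain ⟨a, ha⟩ := Projectivization.exists_smul_eq_mk_rep ℂ v hv
  obtain ⟨n, hn⟩ := hF
  have : eval (Projectivization.mk ℂ v hv).rep F = (a : ℂ) ^ n * eval v F := by
    rw [← ha, Units.smul_def, hn]
  simp only [Zloc, Set.mem_setOf_eq, this, mul_eq_zero, pow_eq_zero_iff', Units.ne_zero,
    false_and, false_or]

lemma Fs0 : Fs 0 = Q := rfl
lemma Fs1 : Fs 1 = X 0 + 2 * X 1 - 4 * X 2 := rfl
lemma Fs2 : Fs 2 = X 0 := rfl
lemma Fs3 : Fs 3 = X 1 := rfl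
lemma Fs4 : Fs 4 = X 0 - X 1 + 2 * X 2 := rfl
lemma Fs5 : Fs 5 = 2 * X 0 + 2 * X 1 - 5 * X 2 := rfl
lemma Fs6 : Fs 6 = X 0 + 7 * X 1 - 4 * X 2 := rfl
lemma Fs7 : Fs 7 = 2 * X 0 - 2 * X 1 + X 2 := rfl

lemma homFs (i : Fin 8) :
    ∃ n : ℕ, ∀ (c : ℂ) (w : Fin 3 → ℂ), eval (c • w) (Fs i) = c ^ n * eval w (Fs i) := by
  fin_cases i
  · refine ⟨2, fun c w => ?_⟩
    show eval (c • w) Q = c ^ 2 * eval w Q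
    simp [Q, Pi.smul_apply, smul_eq_mul]; ring
  · refine ⟨1, fun c w => ?_⟩
    show eval (c • w) (X 0 + 2 * X 1 - 4 * X 2) = c ^ 1 * eval w (X 0 + 2 * X 1 - 4 * X 2)
    simp [Pi.smul_apply, smul_eq_mul]; ring
  · refine ⟨1, fun c w => ?_⟩
    show eval (c • w) (X 0) = c ^ 1 * eval w (X 0)
    simp [Pi.smul_apply, smul_eq_mul]
  · refine ⟨1, fun c w => ?_⟩
    show eval (c • w) (X 1) = c ^ 1 * eval w (X 1)
    simp [Pi.smul_apply, smul_eq_mul]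
  · refine ⟨1, fun c w => ?_⟩
    show eval (c • w) (X 0 - X 1 + 2 * X 2) = c ^ 1 * eval w (X 0 - X 1 + 2 * X 2)
    simp [Pi.smul_apply, smul_eq_mul]; ring
  · refine ⟨1, fun c w => ?_⟩
    show eval (c • w) (2 * X 0 + 2 * X 1 - 5 * X 2) = c ^ 1 * eval w (2 * X 0 + 2 * X 1 - 5 * X 2)
    simp [Pi.smul_apply, smul_eq_mul]; ring
  · refine ⟨1, fun c w => ?_⟩
    show eval (c • w) (X 0 + 7 * X 1 - 4 * X 2) = c ^ 1 * eval w (X 0 + 7 * X 1 - 4 * X 2)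
    simp [Pi.smul_apply, smul_eq_mul]; ring
  · refine ⟨1, fun c w => ?_⟩
    show eval (c • w) (2 * X 0 - 2 * X 1 + X 2) = c ^ 1 * eval w (2 * X 0 - 2 * X 1 + X 2)
    simp [Pi.smul_apply, smul_eq_mul]; ring

lemma memFs (i : Fin 8) (v : Fin 3 → ℂ) (hv : v ≠ 0) :
    Projectivization.mk ℂ v hv ∈ Zloc (Fs i) ↔ eval v (Fs i) = 0 :=
  memZ (homFs i) v hv

lemma memFs_pt (i : Fin 8) (a b c : ℂ) (h : a ≠ 0 ∨ b ≠ 0 ∨ c ≠ 0) :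
    pt a b c h ∈ Zloc (Fs i) ↔ eval ![a, b, c] (Fs i) = 0 :=
  memZ (homFs i) ![a, b, c] (vne h)

lemma memL (v : Fin 3 → ℂ) (hv : v ≠ 0) :
    Projectivization.mk ℂ v hv ∈ Zloc (X 0 + 2 * X 1 - 4 * X 2) ↔
      v 0 + 2 * v 1 - 4 * v 2 = 0 := by
  rw [memZ ⟨1, fun c w => by simp [Pi.smul_apply, smul_eq_mul]; ring⟩ v hv]
  simp

lemma memQv (v : Fin 3 → ℂ) (hv : v ≠ 0) :
    Projectivization.mk ℂ v hv ∈ Zloc Q ↔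
      v 0 ^ 2 + v 1 ^ 2 + v 2 ^ 2 - 2 * v 0 * v 1 - 2 * v 0 * v 2 - 2 * v 1 * v 2 = 0 := by
  rw [memZ ⟨2, fun c w => by simp [Q, Pi.smul_apply, smul_eq_mul]; ring⟩ v hv]
  simp [Q]

lemma mk_eq_pt (v : Fin 3 → ℂ) (hv : v ≠ 0) (a b c t : ℂ) (h : a ≠ 0 ∨ b ≠ 0 ∨ c ≠ 0)
    (h0 : v 0 = t * a) (h1 : v 1 = t * b) (h2 : v 2 = t * c) :
    Projectivization.mk ℂ v hv = pt a b c h := by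
  rw [pt, Projectivization.mk_eq_mk_iff']
  refine ⟨t, ?_⟩
  funext i
  fin_cases i <;> simp [h0, h1, h2]

def pp : P2 := pt (14 - 4 * s) (11 + 2 * s) 9 (Or.inr (Or.inr (by norm_num)))
def qq : P2 := pt (14 + 4 * s) (11 - 2 * s) 9 (Or.inr (Or.inr (by norm_num)))

lemma v2ne (v : Fin 3 → ℂ) (hv : v ≠ 0) (ha : v 0 = 0) (hb : v 1 = 0) : v 2 ≠ 0 := by
  intro hc
  apply hv
  funext i
  fin_cases i <;> simpa [ha, hb, hc]

lemma main_forward (P : P2) (hP : P ∈ Zloc (X 0 + 2 * X 1 - 4 * X 2) ∩ Zloc Q) :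
    P = pp ∨ P = qq := by
  induction P using Projectivization.ind with
  | h v hv =>
  obtain ⟨h1, h2⟩ := hP
  rw [memL v hv] at h1
  rw [memQv v hv] at h2
  have hc : v 2 ≠ 0 := by
    intro hc0
    have h9 : 9 * v 1 ^ 2 = 0 := by
      linear_combination h2 + (-(v 0) + 4 * v 1) * h1 - (v 2 + 2 * v 0 - 18 * v 1) * hc0
    have hb : v 1 = 0 := by
      have hb2 : v 1 ^ 2 = 0 := by linear_combination h9 / 9
      exact pow_eq_zero_iff two_ne_zero |>.mp hb2
    have ha : v 0 = 0 := by linear_combination h1 - 2 * hb + 4 * hc0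
    exact (v2ne v hv ha hb) hc0
  have hfac : (9 * v 1 - (11 + 2 * s) * v 2) * (9 * v 1 - (11 - 2 * s) * v 2) = 0 := by
    linear_combination 9 * h2 + (-9 * v 0 + 36 * v 1 - 18 * v 2) * h1 - 4 * v 2 ^ 2 * hs
  rcases mul_eq_zero.mp hfac with hE | hE
  · left
    exact mk_eq_pt v hv _ _ _ (v 2 / 9) _
      (by linear_combination h1 - (2 / 9) * hE)
      (by linear_combination (1 / 9) * hE)
      (by ring)
  · right
    exact mk_eq_pt v hv _ _ _ (v 2 / 9) _
      (by linear_combination h1 - (2 / 9) * hE)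
      (by linear_combination (1 / 9) * hE)
      (by ring)

lemma pp_ne_qq : pp ≠ qq := by
  intro h
  rw [pp, qq, pt, pt, Projectivization.mk_eq_mk_iff'] at h
  obtain ⟨u, hu⟩ := h
  have h2 := congrFun hu 2
  have h1 := congrFun hu 1
  simp [Pi.smul_apply, smul_eq_mul] at h1 h2
  have hs0 : s = 0 := by linear_combination -h1 / 4 + (11 / 4 - s / 2) * h2
  have := hs
  rw [hs0] at this
  norm_num at this

lemma count_eq_two (P : P2) (h : ∀ i : Fin 8, P ∈ Zloc (Fs i) ↔ i = 0 ∨ i = 1) :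
    count Fs P = 2 := by
  have hset : {i : Fin 8 | P ∈ Zloc (Fs i)} = {0, 1} := by
    ext i; simpa using h i
  rw [count, hset, Set.ncard_pair (by decide)]

lemma count_ge3 (P : P2) (i j k : Fin 8) (hij : i ≠ j) (hik : i ≠ k) (hjk : j ≠ k)
    (m1 : P ∈ Zloc (Fs i)) (m2 : P ∈ Zloc (Fs j)) (m3 : P ∈ Zloc (Fs k)) :
    3 ≤ count Fs P := by
  have hsub : ({i, j, k} : Set (Fin 8)) ⊆ {m | P ∈ Zloc (Fs m)} := by
    rintro m (rfl | rfl | rfl) <;> assumption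
  have h3 : ({i, j, k} : Set (Fin 8)).ncard = 3 := by
    rw [Set.ncard_insert_of_notMem (by simp [hij, hik]) (Set.toFinite _),
      Set.ncard_insert_of_notMem (by simp [hjk]) (Set.toFinite _), Set.ncard_singleton]
  calc 3 = ({i, j, k} : Set (Fin 8)).ncard := h3.symm
    _ ≤ _ := Set.ncard_le_ncard hsub (Set.toFinite _)

lemma count_pp : count Fs pp = 2 := by
  apply count_eq_two
  have e0 : pp ∈ Zloc (Fs 0) :=
    (memFs_pt 0 _ _ _ _).mpr (by rw [Fs0]; simp [Q]; linear_combination (36 : ℂ) * hs)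
  have e1 : pp ∈ Zloc (Fs 1) :=
    (memFs_pt 1 _ _ _ _).mpr (by rw [Fs1]; simp; ring)
  have e2 : pp ∉ Zloc (Fs 2) := fun hx =>
    sne (a := 14) (b := 4) (by norm_num)
      (by have := (memFs_pt 2 _ _ _ _).mp hx; rw [Fs2] at this; simp at this; linear_combination this)
  have e3 : pp ∉ Zloc (Fs 3) := fun hx =>
    sne (a := 11) (b := -2) (by norm_num)
      (by have := (memFs_pt 3 _ _ _ _).mp hx; rw [Fs3] at this; simp at this; linear_combination this)
  have e4 : pp ∉ Zloc (Fs 4) := fun hx =>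
    sne (a := 21) (b := 6) (by norm_num)
      (by have := (memFs_pt 4 _ _ _ _).mp hx; rw [Fs4] at this; simp at this; linear_combination this)
  have e5 : pp ∉ Zloc (Fs 5) := fun hx =>
    sne (a := 5) (b := 4) (by norm_num)
      (by have := (memFs_pt 5 _ _ _ _).mp hx; rw [Fs5] at this; simp at this; linear_combination this)
  have e6 : pp ∉ Zloc (Fs 6) := fun hx =>
    sne (a := 55) (b := -10) (by norm_num)
      (by have := (memFs_pt 6 _ _ _ _).mp hx; rw [Fs6] at this; simp at this; linear_combination this)
  have e7 : pp ∉ Zloc (Fs 7) := fun hx =>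
    sne (a := 15) (b := 12) (by norm_num)
      (by have := (memFs_pt 7 _ _ _ _).mp hx; rw [Fs7] at this; simp at this; linear_combination this)
  intro i
  fin_cases i
  · exact iff_of_true e0 (by decide)
  · exact iff_of_true e1 (by decide)
  · exact iff_of_false e2 (by decide)
  · exact iff_of_false e3 (by decide)
  · exact iff_of_false e4 (by decide)
  · exact iff_of_false e5 (by decide)
  · exact iff_of_false e6 (by decide)
  · exact iff_of_false e7 (by decide)

lemma count_qq : count Fs qq = 2 := by
  apply count_eq_two
  have e0 : qq ∈ Zloc (Fs 0) :=
    (memFs_pt 0 _ _ _ _).mpr (by rw [Fs0]; simp [Q]; linear_combination (36 : ℂ) * hs)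
  have e1 : qq ∈ Zloc (Fs 1) :=
    (memFs_pt 1 _ _ _ _).mpr (by rw [Fs1]; simp; ring)
  have e2 : qq ∉ Zloc (Fs 2) := fun hx =>
    sne (a := 14) (b := -4) (by norm_num)
      (by have := (memFs_pt 2 _ _ _ _).mp hx; rw [Fs2] at this; simp at this; linear_combination this)
  have e3 : qq ∉ Zloc (Fs 3) := fun hx =>
    sne (a := 11) (b := 2) (by norm_num)
      (by have := (memFs_pt 3 _ _ _ _).mp hx; rw [Fs3] at this; simp at this; linear_combination this)
  have e4 : qq ∉ Zloc (Fs 4) := fun hx =>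
    sne (a := 21) (b := -6) (by norm_num)
      (by have := (memFs_pt 4 _ _ _ _).mp hx; rw [Fs4] at this; simp at this; linear_combination this)
  have e5 : qq ∉ Zloc (Fs 5) := fun hx =>
    sne (a := 5) (b := -4) (by norm_num)
      (by have := (memFs_pt 5 _ _ _ _).mp hx; rw [Fs5] at this; simp at this; linear_combination this)
  have e6 : qq ∉ Zloc (Fs 6) := fun hx =>
    sne (a := 55) (b := 10) (by norm_num)
      (by have := (memFs_pt 6 _ _ _ _).mp hx; rw [Fs6] at this; simp at this; linear_combination this)
  have e7 : qq ∉ Zloc (Fs 7) := fun hx =>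
    sne (a := 15) (b := -12) (by norm_num)
      (by have := (memFs_pt 7 _ _ _ _).mp hx; rw [Fs7] at this; simp at this; linear_combination this)
  intro i
  fin_cases i
  · exact iff_of_true e0 (by decide)
  · exact iff_of_true e1 (by decide)
  · exact iff_of_false e2 (by decide)
  · exact iff_of_false e3 (by decide)
  · exact iff_of_false e4 (by decide)
  · exact iff_of_false e5 (by decide)
  · exact iff_of_false e6 (by decide)
  · exact iff_of_false e7 (by decide)

lemma mem4 (v : Fin 3 → ℂ) (hv : v ≠ 0) :
    Projectivization.mk ℂ v hv ∈ Zloc (X 0 - X 1 + 2 * X 2) ↔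
      v 0 - v 1 + 2 * v 2 = 0 := by
  rw [memZ ⟨1, fun c w => by simp [Pi.smul_apply, smul_eq_mul]; ring⟩ v hv]
  simp

lemma mem5 (v : Fin 3 → ℂ) (hv : v ≠ 0) :
    Projectivization.mk ℂ v hv ∈ Zloc (2 * X 0 + 2 * X 1 - 5 * X 2) ↔
      2 * v 0 + 2 * v 1 - 5 * v 2 = 0 := by
  rw [memZ ⟨1, fun c w => by simp [Pi.smul_apply, smul_eq_mul]; ring⟩ v hv]
  simp

lemma mem6 (v : Fin 3 → ℂ) (hv : v ≠ 0) :
    Projectivization.mk ℂ v hv ∈ Zloc (X 0 + 7 * X 1 - 4 * X 2) ↔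
      v 0 + 7 * v 1 - 4 * v 2 = 0 := by
  rw [memZ ⟨1, fun c w => by simp [Pi.smul_apply, smul_eq_mul]; ring⟩ v hv]
  simp

lemma mem7 (v : Fin 3 → ℂ) (hv : v ≠ 0) :
    Projectivization.mk ℂ v hv ∈ Zloc (2 * X 0 - 2 * X 1 + X 2) ↔
      2 * v 0 - 2 * v 1 + v 2 = 0 := by
  rw [memZ ⟨1, fun c w => by simp [Pi.smul_apply, smul_eq_mul]; ring⟩ v hv]
  simp

def ptA : P2 := pt 1 1 0 (Or.inl one_ne_zero)
def ptB : P2 := pt 1 9 4 (Or.inl one_ne_zero)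
def ptC : P2 := pt 9 1 4 (Or.inr (Or.inl one_ne_zero))
def ptD : P2 := pt 1 9 16 (Or.inl one_ne_zero)

lemma fwd4 (P : P2) (hP : P ∈ Zloc (X 0 - X 1 + 2 * X 2) ∩ Zloc Q) :
    P = ptA ∨ P = ptB := by
  induction P using Projectivization.ind with
  | h v hv =>
  obtain ⟨h1, h2⟩ := hP
  rw [mem4 v hv] at h1
  rw [memQv v hv] at h2
  have hfac : v 2 * (9 * v 2 - 4 * v 1) = 0 := by
    linear_combination h2 - (v 0 - v 1 - 4 * v 2) * h1
  rcases mul_eq_zero.mp hfac with hE | hE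
  · left
    exact mk_eq_pt v hv _ _ _ (v 0) _ (by ring)
      (by linear_combination -h1 + 2 * hE) (by linear_combination hE)
  · right
    exact mk_eq_pt v hv _ _ _ (v 2 / 4) _
      (by linear_combination h1 - (1 / 4) * hE)
      (by linear_combination -(1 / 4) * hE) (by ring)

lemma fwd5 (P : P2) (hP : P ∈ Zloc (2 * X 0 + 2 * X 1 - 5 * X 2) ∩ Zloc Q) :
    P = ptC ∨ P = ptB := by
  induction P using Projectivization.ind with
  | h v hv =>
  obtain ⟨h1, h2⟩ := hP
  rw [mem5 v hv] at h1
  rw [memQv v hv] at h2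
  have hfac : (4 * v 1 - v 2) * (4 * v 1 - 9 * v 2) = 0 := by
    linear_combination 4 * h2 + (-2 * v 0 + 6 * v 1 - v 2) * h1
  rcases mul_eq_zero.mp hfac with hE | hE
  · left
    exact mk_eq_pt v hv _ _ _ (v 1) _
      (by linear_combination (1 / 2) * h1 - (5 / 2) * hE) (by ring)
      (by linear_combination -hE)
  · right
    exact mk_eq_pt v hv _ _ _ (v 2 / 4) _
      (by linear_combination (1 / 2) * h1 - (1 / 4) * hE)
      (by linear_combination (1 / 4) * hE) (by ring)

lemma fwd6 (P : P2) (hP : P ∈ Zloc (X 0 + 7 * X 1 - 4 * X 2) ∩ Zloc Q) :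
    P = ptD ∨ P = ptC := by
  induction P using Projectivization.ind with
  | h v hv =>
  obtain ⟨h1, h2⟩ := hP
  rw [mem6 v hv] at h1
  rw [memQv v hv] at h2
  have hfac : (16 * v 1 - 9 * v 2) * (4 * v 1 - v 2) = 0 := by
    linear_combination h2 + (-(v 0) + 9 * v 1 - 2 * v 2) * h1
  rcases mul_eq_zero.mp hfac with hE | hE
  · left
    exact mk_eq_pt v hv _ _ _ (v 2 / 16) _
      (by linear_combination h1 - (7 / 16) * hE)
      (by linear_combination (1 / 16) * hE) (by ring)
  · right
    exact mk_eq_pt v hv _ _ _ (v 1) _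
      (by linear_combination h1 - 4 * hE) (by ring)
      (by linear_combination -hE)

lemma fwd7 (P : P2) (hP : P ∈ Zloc (2 * X 0 - 2 * X 1 + X 2) ∩ Zloc Q) :
    P = ptD ∨ P = ptA := by
  induction P using Projectivization.ind with
  | h v hv =>
  obtain ⟨h1, h2⟩ := hP
  rw [mem7 v hv] at h1
  rw [memQv v hv] at h2
  have hfac : (9 * v 0 - v 1) * (v 0 - v 1) = 0 := by
    linear_combination h2 + (4 * v 0 - v 2) * h1
  rcases mul_eq_zero.mp hfac with hE | hE
  · left
    exact mk_eq_pt v hv _ _ _ (v 0) _ (by ring)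
      (by linear_combination -hE) (by linear_combination h1 - 2 * hE)
  · right
    exact mk_eq_pt v hv _ _ _ (v 0) _ (by ring)
      (by linear_combination -hE) (by linear_combination h1 - 2 * hE)

lemma cA : 3 ≤ count Fs ptA := by
  refine count_ge3 _ 0 4 7 (by decide) (by decide) (by decide) ?_ ?_ ?_
  · exact (memFs_pt 0 _ _ _ _).mpr (by rw [Fs0]; simp [Q]; norm_num)
  · exact (memFs_pt 4 _ _ _ _).mpr (by rw [Fs4]; simp)
  · exact (memFs_pt 7 _ _ _ _).mpr (by rw [Fs7]; simp)

lemma cB : 3 ≤ count Fs ptB := by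
  refine count_ge3 _ 0 4 5 (by decide) (by decide) (by decide) ?_ ?_ ?_
  · exact (memFs_pt 0 _ _ _ _).mpr (by rw [Fs0]; simp [Q]; norm_num)
  · exact (memFs_pt 4 _ _ _ _).mpr (by rw [Fs4]; simp; norm_num)
  · exact (memFs_pt 5 _ _ _ _).mpr (by rw [Fs5]; simp; norm_num)

lemma cC : 3 ≤ count Fs ptC := by
  refine count_ge3 _ 0 5 6 (by decide) (by decide) (by decide) ?_ ?_ ?_
  · exact (memFs_pt 0 _ _ _ _).mpr (by rw [Fs0]; simp [Q]; norm_num)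
  · exact (memFs_pt 5 _ _ _ _).mpr (by rw [Fs5]; simp; norm_num)
  · exact (memFs_pt 6 _ _ _ _).mpr (by rw [Fs6]; simp; norm_num)

lemma cD : 3 ≤ count Fs ptD := by
  refine count_ge3 _ 0 6 7 (by decide) (by decide) (by decide) ?_ ?_ ?_
  · exact (memFs_pt 0 _ _ _ _).mpr (by rw [Fs0]; simp [Q]; norm_num)
  · exact (memFs_pt 6 _ _ _ _).mpr (by rw [Fs6]; simp; norm_num)
  · exact (memFs_pt 7 _ _ _ _).mpr (by rw [Fs7]; simp; norm_num)

theorem stmt19 :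
    (∃ p q : P2, p ≠ q ∧ Zloc (X 0 + 2 * X 1 - 4 * X 2) ∩ Zloc Q = {p, q}) ∧
    (∀ P ∈ Zloc (X 0 + 2 * X 1 - 4 * X 2) ∩ Zloc Q, count Fs P = 2) ∧
    (∀ ℓ ∈ ({(X 0 - X 1 + 2 * X 2), (2 * X 0 + 2 * X 1 - 5 * X 2), (X 0 + 7 * X 1 - 4 * X 2), (2 * X 0 - 2 * X 1 + X 2)} :
        Set (MvPolynomial (Fin 3) ℂ)),
      ∀ P ∈ Zloc ℓ ∩ Zloc Q, 3 ≤ count Fs P) := by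
  refine ⟨⟨pp, qq, pp_ne_qq, ?_⟩, ?_, ?_⟩
  · ext P
    simp only [Set.mem_insert_iff, Set.mem_singleton_iff]
    constructor
    · exact fun h => main_forward P h
    · rintro (rfl | rfl)
      · exact ⟨(memL _ _).mpr (by simp; ring),
          (memQv _ _).mpr (by simp; linear_combination (36 : ℂ) * hs)⟩
      · exact ⟨(memL _ _).mpr (by simp; ring),
          (memQv _ _).mpr (by simp; linear_combination (36 : ℂ) * hs)⟩
  · intro P hP
    rcases main_forward P hP with rfl | rfl
    · exact count_pp
    · exact count_qq
  · intro ℓ hℓ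
    simp only [Set.mem_insert_iff, Set.mem_singleton_iff] at hℓ
    rcases hℓ with rfl | rfl | rfl | rfl
    · intro P hP
      rcases fwd4 P hP with rfl | rfl
      · exact cA
      · exact cB
    · intro P hP
      rcases fwd5 P hP with rfl | rfl
      · exact cC
      · exact cB
    · intro P hP
      rcases fwd6 P hP with rfl | rfl
      · exact cD
      · exact cC
    · intro P hP
      rcases fwd7 P hP with rfl | rfl
      · exact cD
      · exact cA
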